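/- arXiv:cs/0408066 — 4 statements merged into one kernel-verified Lean document; each statement's English description precedes it below -/
import Mathlib

section
/- For b ∈ {1,...,m}, let C_b be an [n_b,k_b,d_b] linear code over Σ and I_b a set of at least n_b - d_b + 1 coordinates; let C'_b be the projection of C_b to I_b. Then every codeword c' of the tensor product C'₁ ⊗ ··· ⊗ C'_m extends to a unique codeword c of C₁ ⊗ ··· ⊗ C_m (i.e., the coordinate projection from C₁ ⊗ ··· ⊗ C_m to I₁ × ··· × I_m is a bijection onto C'₁ ⊗ ··· ⊗ C'_m). -/
/-!
Restricting a code `C` with minimum distance `d` to more than `n - d` coordinates is injective,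
so it has a linear left inverse `E`. Lifting a codeword of `C'₁ ⊗ ⋯ ⊗ C'_m` one axis at a time,
by applying `E_b` to every line in direction `b`, keeps all lines in the directions already
treated inside their codes (the lift acts on them linearly), and turns the lines in direction `b`
into codewords of `C_b`; after `m` steps the array lies in `C₁ ⊗ ⋯ ⊗ C_m`. Uniqueness follows by
the same axis-by-axis induction, using injectivity of each restriction.
-/

/-- Minimum Hamming distance of a code (as a set of words over a finite index type). -/
noncomputable def minDist {ι F : Type} [Fintype ι] [DecidableEq F] (C : Set (ι → F)) : ℕ :=
  sInf {e | ∃ x ∈ C, ∃ y ∈ C, x ≠ y ∧ hammingDist x y = e}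

/-- The `m`-fold tensor product `C₁ ⊗ ⋯ ⊗ C_m` of codes `C b` over coordinate types
`ι b`: the set of `m`-dimensional arrays whose restriction to every axis-parallel line
in direction `b` is a codeword of `C b`. -/
def tensorFam {F : Type} {m : ℕ} {ι : Fin m → Type} (C : ∀ b, Set (ι b → F)) :
    Set (((b : Fin m) → ι b) → F) :=
  {r | ∀ (b : Fin m) (x : (b' : Fin m) → ι b'),
    (fun i => r (Function.update x b i)) ∈ C b}

open Function Finset

def puncture (F : Type) [Semiring F] {ι : Type} (I : Finset ι) : (ι → F) →ₗ[F] (I → F) :=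
  LinearMap.funLeft F F Subtype.val

section Puncture

variable {ι F : Type} [Fintype ι] [DecidableEq F]

theorem eq_of_eqOn_of_card_lt_add_minDist {C : Set (ι → F)} {I : Finset ι}
    (hI : Fintype.card ι < #I + minDist C) {x y : ι → F} (hx : x ∈ C) (hy : y ∈ C)
    (hxy : ∀ i ∈ I, x i = y i) : x = y := by
  classical
  by_contra hne
  have hdist : minDist C ≤ hammingDist x y := Nat.sInf_le ⟨x, hx, y, hy, hne, rfl⟩
  have hsupp : hammingDist x y ≤ #Iᶜ :=
    card_le_card fun i hi => mem_compl.2 fun hiI => (mem_filter.1 hi).2 (hxy i hiI)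
  rw [card_compl] at hsupp
  have := card_le_univ I
  omega

variable [Field F]

theorem exists_puncture_leftInverse {C : Submodule F (ι → F)} {I : Finset ι}
    (hI : Fintype.card ι < #I + minDist (C : Set (ι → F))) :
    ∃ E : (I → F) →ₗ[F] C, ∀ v : C, E (puncture F I v) = v := by
  have hinj : Injective (puncture F I ∘ₗ C.subtype) := fun x y hxy =>
    Subtype.ext <| eq_of_eqOn_of_card_lt_add_minDist hI x.2 y.2 fun i hi => congrFun hxy ⟨i, hi⟩
  obtain ⟨E, hE⟩ := LinearMap.exists_leftInverse_of_injective _ (LinearMap.ker_eq_bot.2 hinj)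
  exact ⟨E, fun v => LinearMap.congr_fun hE v⟩

end Puncture

theorem Submodule.apply_columns_mem {κ ι F : Type} [CommSemiring F] [Fintype κ]
    {D : Submodule F (ι → F)} (φ : (κ → F) →ₗ[F] F) {ℓ : κ → ι → F} (h : ∀ k, ℓ k ∈ D) :
    (fun i => φ fun k => ℓ k i) ∈ D := by
  classical
  have hsum : (fun i => φ fun k => ℓ k i) = ∑ k, φ (fun k' => if k = k' then 1 else 0) • ℓ k := by
    funext i
    rw [LinearMap.pi_apply_eq_sum_univ φ, Finset.sum_apply]
    exact sum_congr rfl fun k _ => mul_comm _ _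
  rw [hsum]
  exact D.sum_mem fun k _ => D.smul_mem _ (h k)

section Lines

variable {β : Type} [DecidableEq β] {ι : β → Type} {F : Type}

def line (r : (∀ b, ι b) → F) (b : β) (X : ∀ b, ι b) : ι b → F :=
  fun i => r (update X b i)

def gridRestrict (I : ∀ b, Finset (ι b)) (r : (∀ b, ι b) → F) : (∀ b, I b) → F :=
  fun x => r fun b => x b

def grid (I : ∀ b, Finset (ι b)) (S : Finset β) : Set (∀ b, ι b) :=
  {X | ∀ b ∉ S, X b ∈ I b}

theorem line_update_self (r : (∀ b, ι b) → F) (b : β) (X : ∀ b, ι b) (j : ι b) :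
    line r b (update X b j) = line r b X := by
  funext i
  simp only [line, update_idem]

theorem update_mem_grid {I : ∀ b, Finset (ι b)} {S : Finset β} {b : β} {X : ∀ b, ι b}
    (hX : X ∈ grid I (insert b S)) {i : ι b} (hi : i ∈ I b) : update X b i ∈ grid I S := by
  intro b' hb'
  rcases eq_or_ne b' b with rfl | hne
  · simpa using hi
  · rw [update_of_ne hne]
    exact hX b' (by simp [hne, hb'])

variable [Field F]

theorem line_gridRestrict (I : ∀ b, Finset (ι b)) (r : (∀ b, ι b) → F) (b : β)
    (x : ∀ b, I b) : line (gridRestrict I r) b x = puncture F (I b) (line r b fun b => x b) := by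
  funext i
  change r _ = r _
  congr 1
  funext b'
  exact apply_update (fun _ => Subtype.val) x b i b'

def extendAlong {I : ∀ b, Finset (ι b)} (b : β) {C : Submodule F (ι b → F)}
    (E : (I b → F) →ₗ[F] C) (g : (∀ b, ι b) → F) : (∀ b, ι b) → F :=
  fun X => (E (puncture F (I b) (line g b X)) : ι b → F) (X b)

variable {I : ∀ b, Finset (ι b)}

theorem line_extendAlong_self (b : β) {C : Submodule F (ι b → F)} (E : (I b → F) →ₗ[F] C)
    (g : (∀ b, ι b) → F) (X : ∀ b, ι b) : line (extendAlong b E g) b X ∈ C := by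
  have hline : line (extendAlong b E g) b X = E (puncture F (I b) (line g b X)) := by
    funext j
    change (E (puncture F (I b) (line g b (update X b j))) : ι b → F) (update X b j b) = _
    rw [line_update_self, update_self]
  exact hline ▸ (E _).2

theorem line_extendAlong_of_ne {b b' : β} (hb : b' ≠ b) {C : Submodule F (ι b → F)}
    (E : (I b → F) →ₗ[F] C) (g : (∀ b, ι b) → F) (X : ∀ b, ι b) {D : Submodule F (ι b' → F)}
    (h : ∀ i ∈ I b, line g b' (update X b i) ∈ D) : line (extendAlong b E g) b' X ∈ D := by
  have hline : line (extendAlong b E g) b' X =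
      fun j => (LinearMap.proj (X b) ∘ₗ C.subtype ∘ₗ E) fun i => line g b' (update X b i) j := by
    funext j
    change (E (puncture F (I b) (line g b (update X b' j))) : ι b → F) (update X b' j b) = _
    have hcol : puncture F (I b) (line g b (update X b' j)) =
        fun i : I b => line g b' (update X b i) j :=
      funext fun i => congrArg g (update_comm hb _ _ _)
    rw [update_of_ne hb.symm, hcol]
    rfl
  rw [hline]
  exact Submodule.apply_columns_mem _ fun i => h i i.2

theorem extendAlong_apply_of_mem {b : β} {C : Submodule F (ι b → F)}
    {E : (I b → F) →ₗ[F] C} (hE : ∀ v : C, E (puncture F (I b) v) = v) (g : (∀ b, ι b) → F)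
    {X : ∀ b, ι b} (hXb : X b ∈ I b)
    (h : puncture F (I b) (line g b X) ∈ C.map (puncture F (I b))) :
    extendAlong b E g X = g X := by
  obtain ⟨c, hc, hcX⟩ := h
  have hEc : (E (puncture F (I b) (line g b X)) : ι b → F) = c := by
    rw [← hcX]
    exact congrArg Subtype.val (hE ⟨c, hc⟩)
  calc extendAlong b E g X = c (X b) := congrFun hEc (X b)
    _ = line g b X (X b) := congrFun hcX ⟨X b, hXb⟩
    _ = g X := by rw [line, update_eq_self]

variable {C : ∀ b, Submodule F (ι b → F)} {r' : (∀ b, I b) → F}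

theorem exists_partial_extension (E : ∀ b, (I b → F) →ₗ[F] C b)
    (hE : ∀ b (v : C b), E b (puncture F (I b) v) = v)
    (hr' : ∀ b x, line r' b x ∈ (C b).map (puncture F (I b))) (S : Finset β) :
    ∃ g, gridRestrict I g = r' ∧ ∀ X ∈ grid I S, ∀ b,
      (b ∈ S → line g b X ∈ C b) ∧
      (b ∉ S → puncture F (I b) (line g b X) ∈ (C b).map (puncture F (I b))) := by
  induction S using Finset.induction_on with
  | empty =>
    have hinj : Injective fun (x : ∀ b, I b) b => (x b : ι b) :=
      fun x y hxy => funext fun b => Subtype.ext (congrFun hxy b)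
    have hr'ext : gridRestrict I (extend _ r' 0) = r' := funext (hinj.extend_apply r' 0)
    refine ⟨extend _ r' 0, hr'ext, fun X hX b => ⟨nofun, fun _ => ?_⟩⟩
    rw [← line_gridRestrict I _ b fun b => ⟨X b, hX b (notMem_empty b)⟩, hr'ext]
    exact hr' b _
  | insert b S hbS ih =>
    obtain ⟨g, hgr, hg⟩ := ih
    refine ⟨extendAlong b (E b) g, ?_, fun X hX b' => ?_⟩
    · rw [← hgr]
      funext x
      exact extendAlong_apply_of_mem (hE b) g (x b).2 (((hg _ fun b _ => (x b).2) b).2 hbS)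
    rcases eq_or_ne b' b with rfl | hne
    · exact ⟨fun _ => line_extendAlong_self b' (E b') g X, fun h => absurd (mem_insert_self b' S) h⟩
    have hcols := fun i (hi : i ∈ I b) => hg _ (update_mem_grid hX hi) b'
    simp only [mem_insert, hne, false_or]
    exact ⟨fun hb' => line_extendAlong_of_ne hne (E b) g X fun i hi => (hcols i hi).1 hb',
      fun hb' => line_extendAlong_of_ne (D := ((C b').map (puncture F (I b'))).comap _)
        hne (E b) g X fun i hi => (hcols i hi).2 hb'⟩

end Lines

section Tensor

variable {β : Type} [DecidableEq β] {ι : β → Type} [∀ b, Fintype (ι b)]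
  [Fintype β] {F : Type} [DecidableEq F] {I : ∀ b, Finset (ι b)}

theorem eq_of_gridRestrict_eq {C : ∀ b, Set (ι b → F)}
    (hI : ∀ b, Fintype.card (ι b) < #(I b) + minDist (C b)) {r s : (∀ b, ι b) → F}
    (hr : ∀ b X, line r b X ∈ C b) (hs : ∀ b X, line s b X ∈ C b)
    (h : gridRestrict I r = gridRestrict I s) : r = s := by
  have hgrid : ∀ S : Finset β, ∀ X ∈ grid I S, r X = s X := by
    intro S
    induction S using Finset.induction_on with
    | empty => exact fun X hX => congrFun h fun b => ⟨X b, hX b (notMem_empty b)⟩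
    | insert b S _ ih =>
      intro X hX
      have hline : line r b X = line s b X :=
        eq_of_eqOn_of_card_lt_add_minDist (hI b) (hr b X) (hs b X) fun i hi =>
          ih _ (update_mem_grid hX hi)
      simpa only [line, update_eq_self] using congrFun hline (X b)
  funext X
  exact hgrid univ X fun b hb => absurd (mem_univ b) hb

variable [Field F] {C : ∀ b, Submodule F (ι b → F)}

theorem exists_extension {r' : (∀ b, I b) → F}
    (hI : ∀ b, Fintype.card (ι b) < #(I b) + minDist (C b : Set (ι b → F)))
    (hr' : ∀ b x, line r' b x ∈ (C b).map (puncture F (I b))) :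
    ∃ g, (∀ b X, line g b X ∈ C b) ∧ gridRestrict I g = r' := by
  choose E hE using fun b => exists_puncture_leftInverse (hI b)
  obtain ⟨g, hgr, hg⟩ := exists_partial_extension E hE hr' univ
  exact ⟨g, fun b X => (hg X (fun b hb => absurd (mem_univ b) hb) b).1 (mem_univ b), hgr⟩

end Tensor

theorem tensor_unique_extension_general
    {F : Type} [Field F] [DecidableEq F] {m : ℕ}
    (n d : Fin m → ℕ)
    (C : ∀ b, Submodule F (Fin (n b) → F))
    (hd : ∀ b, minDist ((C b : Set (Fin (n b) → F))) = d b)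
    (I : ∀ b, Finset (Fin (n b))) (hI : ∀ b, n b - d b + 1 ≤ (I b).card) :
    Set.BijOn
      (fun (r : ((b : Fin m) → Fin (n b)) → F) (x : (b : Fin m) → (I b : Finset (Fin (n b)))) =>
        r (fun b => (x b : Fin (n b))))
      (tensorFam (fun b => (C b : Set (Fin (n b) → F))))
      (tensorFam (fun b =>
        (fun (v : Fin (n b) → F) (i : (I b : Finset (Fin (n b)))) => v (i : Fin (n b))) ''
          (C b : Set (Fin (n b) → F)))) := by
  have hI' : ∀ b, Fintype.card (Fin (n b)) < #(I b) + minDist (C b : Set (Fin (n b) → F)) := by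
    intro b
    rw [Fintype.card_fin, hd]
    have := hI b
    omega
  change Set.BijOn (gridRestrict I) {r | ∀ b X, line r b X ∈ C b}
    {r' | ∀ b x, line r' b x ∈ (C b).map (puncture F (I b))}
  refine ⟨fun r hr b x => ?_, fun r hr s hs h => eq_of_gridRestrict_eq hI' hr hs h,
    fun r' hr' => ?_⟩
  · rw [line_gridRestrict]
    exact Submodule.mem_map_of_mem (hr b _)
  · exact exists_extension hI' hr'

/-- For `b ∈ [m]`, let `C b` be an `[n b, k b, d b]` code and `I b` a set of
at least `n b - d b + 1` coordinates. Then the coordinate projection from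
`C₁ ⊗ ⋯ ⊗ C_m` to `I₁ × ⋯ × I_m` is a bijection onto `C'₁ ⊗ ⋯ ⊗ C'_m`, where `C' b`
is the projection of `C b` to `I b`; i.e. every codeword of the projected tensor code
extends to a unique codeword of the full tensor code. -/
theorem tensor_unique_extension
    {F : Type} [Field F] [DecidableEq F] {m : ℕ}
    (n k d : Fin m → ℕ)
    (C : ∀ b, Submodule F (Fin (n b) → F))
    (hk : ∀ b, Module.finrank F (C b) = k b)
    (hd : ∀ b, minDist ((C b : Set (Fin (n b) → F))) = d b)
    (I : ∀ b, Finset (Fin (n b))) (hI : ∀ b, n b - d b + 1 ≤ (I b).card) :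
    Set.BijOn
      (fun (r : ((b : Fin m) → Fin (n b)) → F) (x : (b : Fin m) → (I b : Finset (Fin (n b)))) =>
        r (fun b => (x b : Fin (n b))))
      (tensorFam (fun b => (C b : Set (Fin (n b) → F))))
      (tensorFam (fun b =>
        (fun (v : Fin (n b) → F) (i : (I b : Finset (Fin (n b)))) => v (i : Fin (n b))) ''
          (C b : Set (Fin (n b) → F)))) :=
  tensor_unique_extension_general n d C hd I hI
end

section
/- Robustness multiplies under Tanner composition: with C = TPC(G₁,C₁) and C₁ = TPC(G₂,C₂) as in the composition setup, if the pair (G₁,C₁) is c₁-robust and (G₂,C₂) is c₂-robust, then (G₁ © G₂, C₂) is c₁·c₂-robust. -/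
/-- Relative Hamming distance between two words indexed by a finite type. -/
noncomputable def relHammingDist {ι F : Type} [Fintype ι] [DecidableEq F] (x y : ι → F) : ℝ :=
  (hammingDist x y : ℝ) / (Fintype.card ι)

/-- Relative Hamming distance from a word to (the nearest codeword of) a code. -/
noncomputable def distToCode {ι F : Type} [Fintype ι] [DecidableEq F] (C : Set (ι → F)) (r : ι → F) : ℝ :=
  sInf (relHammingDist r '' C)

/-- The Tanner product code of an ordered bipartite graph (given by its ordered
adjacency lists `ℓ j : Q → V`) and a small code `Cs ⊆ F^Q`. -/
def TPC {F V Q J : Type} (ℓ : J → Q → V) (Cs : Set (Q → F)) : Set (V → F) :=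
  {r | ∀ j, (fun q => r (ℓ j q)) ∈ Cs}

/-- A Tanner pair `(G, Cs)` is `α`-robust: for every word `r`, the expected relative
distance of the projection of `r` to a random test's neighborhood from `Cs` is at
least `α` times the relative distance of `r` from `TPC(G, Cs)`. (Codewords trivially
pass all tests, by definition of `TPC`.) -/
def IsRobustPair {F V Q J : Type} [Fintype V] [Fintype Q] [Fintype J] [DecidableEq F]
    (α : ℝ) (ℓ : J → Q → V) (Cs : Set (Q → F)) : Prop :=
  ∀ r : V → F,
    α * distToCode (TPC ℓ Cs) r ≤
      (∑ j : J, distToCode Cs (fun q => r (ℓ j q))) / (Fintype.card J)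

/-! A word lies in `TPC(G₁ © G₂, C₂)` exactly when it lies in `TPC(G₁, TPC(G₂, C₂))`. Robustness
of `(G₁, C₁)` bounds `c₁ δ_C(r)` by the average of `δ_{C₁}(r|ℓⱼ)`, robustness of `(G₂, C₂)` bounds
each `c₂ δ_{C₁}(r|ℓⱼ)` by an average over `j'`, and the nested averages form the average over
the composed tests `(j, j')`. -/

theorem TPC_comp {F V W Q J K : Type} (ℓ₁ : J → W → V) (ℓ₂ : K → Q → W) (C : Set (Q → F)) :
    TPC (fun (p : J × K) (i : Q) => ℓ₁ p.1 (ℓ₂ p.2 i)) C = TPC ℓ₁ (TPC ℓ₂ C) :=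
  Set.ext fun _ => ⟨fun h j k => h (j, k), fun h p => h p.1 p.2⟩

theorem sum_prod_div_card {J K : Type} [Fintype J] [Fintype K] (f : J × K → ℝ) :
    (∑ p, f p) / Fintype.card (J × K) =
      (∑ j, (∑ k, f (j, k)) / Fintype.card K) / Fintype.card J := by
  rw [Fintype.sum_prod_type, ← Finset.sum_div, Fintype.card_prod, Nat.cast_mul, div_div,
    mul_comm]

theorem IsRobustPair.comp {F V W Q J K : Type} [Fintype V] [Fintype W] [Fintype Q] [Fintype J]
    [Fintype K] [DecidableEq F] {c₁ c₂ : ℝ} {ℓ₁ : J → W → V} {ℓ₂ : K → Q → W} {C : Set (Q → F)}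
    (hc₂ : 0 ≤ c₂) (h₁ : IsRobustPair c₁ ℓ₁ (TPC ℓ₂ C)) (h₂ : IsRobustPair c₂ ℓ₂ C) :
    IsRobustPair (c₁ * c₂) (fun (p : J × K) (i : Q) => ℓ₁ p.1 (ℓ₂ p.2 i)) C := by
  intro r
  have inner : c₂ * ∑ j, distToCode (TPC ℓ₂ C) (fun w => r (ℓ₁ j w)) ≤
      ∑ j, (∑ k, distToCode C (fun q => r (ℓ₁ j (ℓ₂ k q)))) / Fintype.card K := by
    rw [Finset.mul_sum]
    exact Finset.sum_le_sum fun j _ => h₂ fun w => r (ℓ₁ j w)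
  rw [TPC_comp, sum_prod_div_card]
  calc c₁ * c₂ * distToCode (TPC ℓ₁ (TPC ℓ₂ C)) r
      = c₂ * (c₁ * distToCode (TPC ℓ₁ (TPC ℓ₂ C)) r) := by ring
    _ ≤ c₂ * ((∑ j, distToCode (TPC ℓ₂ C) (fun w => r (ℓ₁ j w))) / Fintype.card J) :=
        mul_le_mul_of_nonneg_left (h₁ r) hc₂
    _ = (c₂ * ∑ j, distToCode (TPC ℓ₂ C) (fun w => r (ℓ₁ j w))) / Fintype.card J :=
        (mul_div_assoc _ _ _).symm
    _ ≤ _ := div_le_div_of_nonneg_right inner (Nat.cast_nonneg _)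

theorem robustness_multiplies_general
    {F : Type} [DecidableEq F] {N M D m d : ℕ}
    (ℓ₁ : Fin M → Fin D → Fin N) (ℓ₂ : Fin m → Fin d → Fin D)
    (C₂ : Set (Fin d → F)) (C₁ : Set (Fin D → F)) (hC₁ : C₁ = TPC ℓ₂ C₂)
    (c₁ c₂ : ℝ) (hc₂ : 0 ≤ c₂)
    (h₁ : IsRobustPair c₁ ℓ₁ C₁) (h₂ : IsRobustPair c₂ ℓ₂ C₂) :
    IsRobustPair (c₁ * c₂) (fun (p : Fin M × Fin m) (i : Fin d) => ℓ₁ p.1 (ℓ₂ p.2 i)) C₂ := by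
  subst hC₁
  exact h₁.comp hc₂ h₂

/-- Robustness multiplies under Tanner composition. If `C₁ = TPC(G₂, C₂)`,
`(G₁, C₁)` is `c₁`-robust and `(G₂, C₂)` is `c₂`-robust, then the composed pair
`(G₁ © G₂, C₂)` is `c₁·c₂`-robust. -/
theorem robustness_multiplies
    {F : Type} [Field F] [Fintype F] [DecidableEq F] {N M D m d : ℕ}
    (ℓ₁ : Fin M → Fin D → Fin N) (ℓ₂ : Fin m → Fin d → Fin D)
    (C₂ : Set (Fin d → F)) (C₁ : Set (Fin D → F)) (hC₁ : C₁ = TPC ℓ₂ C₂)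
    (c₁ c₂ : ℝ) (hc₁ : 0 ≤ c₁) (hc₂ : 0 ≤ c₂)
    (h₁ : IsRobustPair c₁ ℓ₁ C₁) (h₂ : IsRobustPair c₂ ℓ₂ C₂) :
    IsRobustPair (c₁ * c₂) (fun (p : Fin M × Fin m) (i : Fin d) => ℓ₁ p.1 (ℓ₂ p.2 i)) C₂ :=
  robustness_multiplies_general ℓ₁ ℓ₂ C₂ C₁ hC₁ c₁ c₂ hc₂ h₁ h₂
end

section
/- Expansion of the product-test graph: Fix n and m ≥ 3 and let G^n_m be the bipartite graph with left vertex set L = [n]^m, right vertex set R = [m] × [n], where point (i₁,...,i_m) is adjacent to plane (b,i) iff i_b = i; so left degree d_L = m and right degree d_R = n^{m-1}. For any S ⊆ L with |S|/|L| ≤ 1/4 and any T ⊆ R, the number of edges with exactly one endpoint in S ∪ T satisfies |Γ(S ∪ T)| ≥ (d_L/8)|S| + (d_R/8)|T|. -/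
/-!
Write `σ_b(a)` for the number of points of `S` on the plane `(b, a)` and `N = n^(m-1)` for the
size of a plane. The plane `(b, a)` carries `N - σ_b(a)` boundary edges if it lies in `T` and
`σ_b(a)` otherwise; in both cases this is at least `σ_b(a) - (8/7) σ_b(a)² / N`, plus `N/8` when
the plane lies in `T`. Summing over planes, it remains to bound the energy `∑ σ_b(a)²` by
`N |S| + m |S|² / n`, which for `|S| ≤ n^m / 4` is at most `(1 + m/4) N |S|`.

The energy bound is Bessel's inequality for the coordinate projections. The centred profiles
`c_b(a) = σ_b(a) - |S|/n` have mean zero, so the functions `u ↦ c_b(u_b)` on the cube are pairwise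
orthogonal and `H u = ∑_b c_b(u_b)` has `‖H‖² = N ∑ c²`, while `∑_{u ∈ S} H u = ∑ c²`.
Cauchy–Schwarz on `S` then gives `∑ c² ≤ N |S|`.
-/

open Finset

/- `8/7` is the least constant for which this holds for every `x`: the difference is a quadratic
in `x` with vanishing discriminant. -/
lemma two_mul_sub_sq_div_le {N : ℝ} (hN : 0 < N) (x : ℝ) :
    2 * x - 8 / 7 * x ^ 2 / N ≤ 7 / 8 * N := by
  have hsq : 0 ≤ 8 / (7 * N) * (x - 7 / 8 * N) ^ 2 := by positivity
  have hexpand : 8 / (7 * N) * (x - 7 / 8 * N) ^ 2 = 8 / 7 * x ^ 2 / N - 2 * x + 7 / 8 * N := by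
    field_simp
    ring
  linarith

section Cube

variable {ι α R : Type*} [Fintype ι] [DecidableEq ι] [Fintype α] [DecidableEq α]

lemma card_filter_apply_eq (b : ι) (a : α) :
    #{u : ι → α | u b = a} = Fintype.card α ^ (Fintype.card ι - 1) := by
  simpa using Fintype.card_filter_piFinset_const_eq_of_mem (univ : Finset α) b (mem_univ a)

lemma card_filter_apply_eq_and_apply_eq {b b' : ι} (hb : b ≠ b') (a a' : α) :
    #{u : ι → α | u b = a ∧ u b' = a'} = Fintype.card α ^ (Fintype.card ι - 2) := by
  set s := Function.update (Function.update (fun _ : ι => (univ : Finset α)) b {a}) b' {a'}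
  have hfiber : ({u : ι → α | u b = a ∧ u b' = a'} : Finset _) = Fintype.piFinset s := by
    ext u
    simp only [mem_filter, mem_univ, true_and, Fintype.mem_piFinset, s, Function.update_apply]
    grind
  have hcard : ∀ c, #(s c) =
      Function.update (Function.update (fun _ => Fintype.card α) b 1) b' 1 c := by
    intro c
    simp only [s, Function.update_apply]
    split_ifs <;> simp
  rw [hfiber, Fintype.card_piFinset, Fintype.prod_congr _ _ hcard,
    prod_update_of_mem (mem_univ _), prod_update_of_mem (by simp [hb]), prod_const]
  simp [card_sdiff, hb, Nat.sub_sub]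

lemma sum_comp_apply [CommSemiring R] (b : ι) (φ : α → R) :
    ∑ u : ι → α, φ (u b) = Fintype.card α ^ (Fintype.card ι - 1) * ∑ a, φ a := by
  rw [← sum_fiberwise univ (fun u : ι → α => u b), mul_sum]
  refine sum_congr rfl fun a _ => ?_
  rw [sum_congr rfl fun u hu => congrArg φ (mem_filter.1 hu).2, sum_const,
    card_filter_apply_eq, nsmul_eq_mul]
  push_cast
  rfl

lemma sum_comp_apply_mul_comp_apply [CommSemiring R] {b b' : ι} (hb : b ≠ b') (φ ψ : α → R) :
    ∑ u : ι → α, φ (u b) * ψ (u b') =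
      Fintype.card α ^ (Fintype.card ι - 2) * (∑ a, φ a) * ∑ a, ψ a := by
  have hfiber : ∀ a a', ∑ u : ι → α with (u b, u b') = (a, a'), φ (u b) * ψ (u b') =
      Fintype.card α ^ (Fintype.card ι - 2) * (φ a * ψ a') := fun a a' => by
    simp_rw [Prod.mk.injEq]
    rw [sum_congr rfl fun u hu => by rw [(mem_filter.1 hu).2.1, (mem_filter.1 hu).2.2],
      sum_const, card_filter_apply_eq_and_apply_eq hb, nsmul_eq_mul]
    push_cast
    rfl
  rw [← sum_fiberwise univ (fun u : ι → α => (u b, u b')), Fintype.sum_prod_type]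
  simp only [hfiber, ← mul_sum, ← sum_mul, mul_assoc]

lemma sum_sq_sum_comp_apply_of_sum_eq_zero [CommRing R] (c : ι → α → R)
    (hc : ∀ b, ∑ a, c b a = 0) :
    ∑ u : ι → α, (∑ b, c b (u b)) ^ 2 =
      Fintype.card α ^ (Fintype.card ι - 1) * ∑ b, ∑ a, c b a ^ 2 := by
  simp_rw [sq, sum_mul_sum]
  rw [sum_comm, mul_sum]
  refine sum_congr rfl fun b _ => ?_
  rw [sum_comm, Fintype.sum_eq_single b fun b' hb' => by
      rw [sum_comp_apply_mul_comp_apply hb'.symm, hc, mul_zero, zero_mul],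
    sum_comp_apply b fun a => c b a * c b a]

lemma sq_sum_sum_comp_apply_le (S : Finset (ι → α)) (c : ι → α → ℝ)
    (hc : ∀ b, ∑ a, c b a = 0) :
    (∑ u ∈ S, ∑ b, c b (u b)) ^ 2 ≤
      #S * ((Fintype.card α : ℝ) ^ (Fintype.card ι - 1) * ∑ b, ∑ a, c b a ^ 2) := calc
  _ ≤ (#S : ℝ) * ∑ u ∈ S, (∑ b, c b (u b)) ^ 2 := sq_sum_le_card_mul_sum_sq
  _ ≤ (#S : ℝ) * ∑ u : ι → α, (∑ b, c b (u b)) ^ 2 := by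
    gcongr
    exact subset_univ S
  _ = _ := by rw [sum_sq_sum_comp_apply_of_sum_eq_zero c hc]

end Cube

namespace ProductGraph

variable {ι α R : Type*}

def sliceCard [DecidableEq α] (S : Finset (ι → α)) (b : ι) (a : α) : ℕ := #{u ∈ S | u b = a}

variable [Fintype α] [DecidableEq α]

lemma sum_sliceCard (S : Finset (ι → α)) (b : ι) : ∑ a, sliceCard S b a = #S :=
  (card_eq_sum_card_fiberwise fun u _ => mem_univ (u b)).symm

lemma sum_comp_apply_eq_sum_sliceCard_mul [CommSemiring R] (S : Finset (ι → α)) (b : ι)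
    (φ : α → R) : ∑ u ∈ S, φ (u b) = ∑ a, sliceCard S b a * φ a := by
  rw [← sum_fiberwise S (fun u => u b)]
  refine sum_congr rfl fun a _ => ?_
  rw [sum_congr rfl fun u hu => congrArg φ (mem_filter.1 hu).2, sum_const, nsmul_eq_mul]
  rfl

variable [Fintype ι] [DecidableEq ι]

lemma sum_sq_sliceCard_le [Nonempty α] (S : Finset (ι → α)) :
    ∑ b, ∑ a, (sliceCard S b a : ℝ) ^ 2 ≤
      (Fintype.card α : ℝ) ^ (Fintype.card ι - 1) * #S +
        Fintype.card ι * #S ^ 2 / Fintype.card α := by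
  set n : ℝ := (Fintype.card α : ℝ)
  set N : ℝ := n ^ (Fintype.card ι - 1)
  have hn : 0 < n := by simp [n, Fintype.card_pos]
  set c : ι → α → ℝ := fun b a => sliceCard S b a - #S / n
  set D := ∑ b, ∑ a, c b a ^ 2
  have hc : ∀ b, ∑ a, c b a = 0 := fun b => by
    simp only [c, sum_sub_distrib, sum_const, card_univ, nsmul_eq_mul]
    rw [← Nat.cast_sum, sum_sliceCard]
    field_simp
    ring
  have hσ : ∀ b a, (sliceCard S b a : ℝ) = c b a + #S / n := fun b a => by simp [c]
  clear_value c
  have hslice : ∀ b, ∑ a, (sliceCard S b a : ℝ) ^ 2 = ∑ a, c b a ^ 2 + #S ^ 2 / n := fun b => by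
    simp only [hσ, add_sq, sum_add_distrib, ← sum_mul, ← mul_sum, hc, sum_const, card_univ,
      nsmul_eq_mul]
    field_simp
    ring
  have hinner : ∑ u ∈ S, ∑ b, c b (u b) = D := by
    rw [sum_comm]
    refine sum_congr rfl fun b _ => ?_
    simp only [sum_comp_apply_eq_sum_sliceCard_mul, hσ, add_mul, sum_add_distrib, ← mul_sum, hc,
      mul_zero, add_zero, sq]
  have hCS : D ^ 2 ≤ #S * (N * D) := by
    simpa only [hinner] using sq_sum_sum_comp_apply_le S c hc
  have hD : D ≤ N * #S := by
    have : 0 ≤ D := by positivity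
    have : 0 ≤ N * #S := by positivity
    nlinarith
  rw [sum_congr rfl fun b _ => hslice b, sum_add_distrib, sum_const, card_univ, nsmul_eq_mul,
    mul_div_assoc]
  linarith

lemma sum_sq_sliceCard_le_of_card_le [Nonempty ι] [Nonempty α] {S : Finset (ι → α)}
    (hS : (#S : ℝ) ≤ (Fintype.card α : ℝ) ^ Fintype.card ι / 4) :
    ∑ b, ∑ a, (sliceCard S b a : ℝ) ^ 2 ≤
      (1 + Fintype.card ι / 4) * (Fintype.card α : ℝ) ^ (Fintype.card ι - 1) * #S := by
  have hE := sum_sq_sliceCard_le S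
  set m := Fintype.card ι
  set n : ℝ := (Fintype.card α : ℝ)
  set N : ℝ := n ^ (m - 1)
  have hn : 0 < n := by simp [n, Fintype.card_pos]
  have hnN : n ^ m = n * N := by rw [← pow_succ', Nat.sub_add_cancel Fintype.card_pos]
  have hquad : m * (#S : ℝ) ^ 2 / n ≤ m / 4 * N * #S := by
    rw [div_le_iff₀ hn]
    nlinarith [mul_le_mul_of_nonneg_left (hnN ▸ hS) (by positivity : (0 : ℝ) ≤ m * #S)]
  linarith

lemma card_boundary_eq (S : Finset (ι → α)) (T : Finset (ι × α)) :
    (#{p : (ι → α) × ι | Xor (p.1 ∈ S) ((p.2, p.1 p.2) ∈ T)} : ℝ) =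
      ∑ b, ∑ a, if (b, a) ∈ T then (Fintype.card α : ℝ) ^ (Fintype.card ι - 1) - sliceCard S b a
        else (sliceCard S b a : ℝ) := by
  -- the crossing indicator is affine in `[u ∈ S]`, so both parts reduce to slice counts
  have hxor : ∀ (u : ι → α) b, (if Xor (u ∈ S) ((b, u b) ∈ T) then (1 : ℝ) else 0) =
      (if (b, u b) ∈ T then 1 else 0) + if u ∈ S then (if (b, u b) ∈ T then -1 else 1) else 0 := by
    intro u b
    by_cases hu : u ∈ S <;> by_cases hT : (b, u b) ∈ T <;> simp [hu, hT]
  rw [natCast_card_filter, Fintype.sum_prod_type, sum_comm]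
  refine sum_congr rfl fun b _ => ?_
  simp only [hxor, sum_add_distrib, sum_ite_mem, univ_inter]
  rw [sum_comp_apply b fun a => if (b, a) ∈ T then (1 : ℝ) else 0,
    sum_comp_apply_eq_sum_sliceCard_mul S b fun a => if (b, a) ∈ T then (-1 : ℝ) else 1,
    mul_sum, ← sum_add_distrib]
  refine sum_congr rfl fun a _ => ?_
  split_ifs <;> ring

theorem card_boundary_ge (hι : 2 ≤ Fintype.card ι) (S : Finset (ι → α)) (T : Finset (ι × α))
    (hS : (#S : ℝ) ≤ (Fintype.card α : ℝ) ^ Fintype.card ι / 4) :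
    (Fintype.card ι : ℝ) / 8 * #S + (Fintype.card α : ℝ) ^ (Fintype.card ι - 1) / 8 * #T ≤
      #{p : (ι → α) × ι | Xor (p.1 ∈ S) ((p.2, p.1 p.2) ∈ T)} := by
  have : Nonempty ι := Fintype.card_pos_iff.1 (by omega)
  obtain hα | hα := isEmpty_or_nonempty α
  · simp [eq_empty_of_isEmpty S, zero_pow (show Fintype.card ι - 1 ≠ 0 by omega)]
  have hE := sum_sq_sliceCard_le_of_card_le hS
  set m := Fintype.card ι
  set N : ℝ := (Fintype.card α : ℝ) ^ (m - 1)
  have hN : 0 < N := by positivity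
  set E := ∑ b, ∑ a, (sliceCard S b a : ℝ) ^ 2
  have hEN : E / N ≤ (1 + m / 4) * #S := by
    rw [div_le_iff₀ hN]
    linarith
  have hT : ∑ b, ∑ a, (if (b, a) ∈ T then N / 8 else 0) = N / 8 * #T := by
    rw [← Fintype.sum_prod_type' fun b a => if (b, a) ∈ T then N / 8 else 0]
    simp [sum_ite_mem, mul_comm]
  calc (m : ℝ) / 8 * #S + N / 8 * #T ≤ m * #S - 8 / 7 * E / N + N / 8 * #T := by
        have : (2 : ℝ) ≤ m := by exact_mod_cast hι
        rw [mul_div_assoc]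
        nlinarith [(Nat.cast_nonneg #S : (0 : ℝ) ≤ #S)]
    _ = ∑ b, ∑ a, ((sliceCard S b a : ℝ) - 8 / 7 * (sliceCard S b a : ℝ) ^ 2 / N
          + if (b, a) ∈ T then N / 8 else 0) := by
        simp only [sum_add_distrib, sum_sub_distrib, ← sum_div, ← mul_sum, hT, ← Nat.cast_sum,
          sum_sliceCard, sum_const, card_univ, nsmul_eq_mul]
        push_cast
        rfl
    _ ≤ ∑ b, ∑ a, if (b, a) ∈ T then N - sliceCard S b a else (sliceCard S b a : ℝ) := by
        gcongr with b _ a _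
        have := two_mul_sub_sq_div_le hN (sliceCard S b a)
        have : 0 ≤ 8 / 7 * (sliceCard S b a : ℝ) ^ 2 / N := by positivity
        split_ifs <;> linarith
    _ = _ := (card_boundary_eq S T).symm

end ProductGraph

/-- Expansion of the product-test graph `G^n_m` (m ≥ 3), the bipartite
incidence graph between points `[n]^m` (left, degree `m`) and axis-parallel hyperplanes
`[m] × [n]` (right, degree `n^{m-1}`), point `u` adjacent to plane `(b,i)` iff `u b = i`.
Edges are identified with pairs `(u, b)`, the corresponding plane being `(b, u b)`.
For `S ⊆ L` with `|S| ≤ |L|/4` and any `T ⊆ R`, the number of edges with exactly one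
endpoint in `S ∪ T` is at least `(m/8)|S| + (n^{m-1}/8)|T|`. -/
theorem product_graph_expansion {n m : ℕ} (hm : 3 ≤ m)
    (S : Finset (Fin m → Fin n)) (T : Finset (Fin m × Fin n))
    (hS : (S.card : ℝ) ≤ (n ^ m : ℝ) / 4) :
    (m : ℝ) / 8 * S.card + ((n : ℝ) ^ (m - 1)) / 8 * T.card ≤
      ((Finset.univ.filter (fun p : (Fin m → Fin n) × Fin m =>
        Xor (p.1 ∈ S) ((p.2, p.1 p.2) ∈ T))).card : ℝ) := by
  simpa using ProductGraph.card_boundary_ge (by simp only [Fintype.card_fin]; omega) S T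
    (by simpa using hS)
end

section
/- Self-improvement via expansion: Let m be a positive integer and C an [n,k,d] code over Σ with (d/n)^{m-1} ≥ 7/8. If r ∈ Σ^{[n]^m} and c ∈ C^m satisfy δ(r,c) ≤ 1/4, then δ(r,c) ≤ 8·ρ(r), where ρ(r) = E_{b∈[m], i∈[n]}[δ_{C^{m-1}}(r_{b,i})] is the expected robustness of the m-Product Tester on r. -/
/-- The `m`-fold tensor power `C^m` of a code `C ⊆ F^n`. -/
def tensorPow {F : Type} {n : ℕ} (C : Set (Fin n → F)) (m : ℕ) :
    Set ((Fin m → Fin n) → F) :=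
  {r | ∀ (b : Fin m) (x : Fin m → Fin n), (fun i => r (Function.update x b i)) ∈ C}

/-- The slice `r_{b,i}`: fix the `b`-th coordinate of the array to `i`. -/
def sliceAt {F : Type} {n m : ℕ} (r : (Fin (m + 1) → Fin n) → F) (b : Fin (m + 1)) (i : Fin n) :
    (Fin m → Fin n) → F :=
  fun x => r (b.insertNth i x)

/-!
Let `t b i` be the relative distance between the slices `r_{b,i}` and `c_{b,i}`, so that
`∑ i, t b i = n δ(r, c)` for every direction `b`. The tensor power `C^m` has relative distance at
least `(d/n)^m ≥ 7/8` and `c_{b,i} ∈ C^m`, so the slice `r_{b,i}` is at distance at least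
`min (t b i) (7/8 - t b i)` from `C^m`: light slices (`t ≤ 7/16`) pay their whole mass, and heavy
slices are few, since each pays at least `7/8 - t`.

Fix two directions `b ≠ b'`. The points where `r ≠ c` lie in the block (heavy `b`-slices) ×
(heavy `b'`-slices), which holds a `#H #K / n²` fraction of the cube, or in a light slice of
one of the two directions. Since `δ(r, c) ≤ 1/4`, this block is too small to hold much of the
mass, which gives `n δ(r, c) / 4 ≤ ρ_b + ρ_{b'}` for the total robustness `ρ_b` of the
direction `b`. Summing over the pairs `(b, b + 1)` gives the factor `8`.
-/

open Finset

section Codes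

variable {ι F : Type} [Fintype ι] [DecidableEq F]

lemma relHammingDist_nonneg (x y : ι → F) : 0 ≤ relHammingDist x y := by
  unfold relHammingDist
  positivity

lemma relHammingDist_comm (x y : ι → F) : relHammingDist x y = relHammingDist y x := by
  rw [relHammingDist, relHammingDist, hammingDist_comm]

lemma relHammingDist_triangle (x y z : ι → F) :
    relHammingDist x z ≤ relHammingDist x y + relHammingDist y z := by
  rw [relHammingDist, relHammingDist, relHammingDist, ← add_div]
  gcongr
  exact_mod_cast hammingDist_triangle x y z

lemma minDist_le_hammingDist {C : Set (ι → F)} {x y : ι → F} (hx : x ∈ C) (hy : y ∈ C)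
    (hxy : x ≠ y) : minDist C ≤ hammingDist x y :=
  Nat.sInf_le ⟨x, hx, y, hy, hxy, rfl⟩

lemma distToCode_nonneg (C : Set (ι → F)) (r : ι → F) : 0 ≤ distToCode C r :=
  Real.sInf_nonneg fun _ ⟨_, _, h⟩ ↦ h ▸ relHammingDist_nonneg _ _

lemma min_le_distToCode {C : Set (ι → F)} {D : ℝ}
    (hC : ∀ w ∈ C, ∀ w' ∈ C, w ≠ w' → D ≤ relHammingDist w w') {c : ι → F} (hc : c ∈ C)
    (r : ι → F) :
    min (relHammingDist r c) (D - relHammingDist r c) ≤ distToCode C r := by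
  refine le_csInf ⟨_, c, hc, rfl⟩ ?_
  rintro _ ⟨w, hw, rfl⟩
  rcases eq_or_ne w c with rfl | hwc
  · exact min_le_left _ _
  · refine (min_le_right _ _).trans ?_
    have := hC c hc w hw hwc.symm
    have := relHammingDist_triangle c r w
    rw [relHammingDist_comm c r] at this
    linarith

end Codes

section Cylinder

variable {ι α : Type*} [Fintype ι] [DecidableEq ι] [Fintype α] [DecidableEq α]

lemma prod_update_mul_apply {M : Type*} [CommMonoid M] (f : ι → M) (i : ι) (c : M) :
    (∏ k, Function.update f i c k) * f i = c * ∏ k, f k := by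
  rw [prod_update_of_mem (mem_univ i), prod_eq_prod_sdiff_singleton_mul (mem_univ i), mul_assoc]

lemma card_filter_mem_and_mem_mul_sq {b b' : ι} (hb : b ≠ b') (H K : Finset α) :
    #{x : ι → α | x b ∈ H ∧ x b' ∈ K} * Fintype.card α ^ 2
      = #H * #K * Fintype.card α ^ Fintype.card ι := by
  have hcyl : ({x : ι → α | x b ∈ H ∧ x b' ∈ K} : Finset _)
      = Fintype.piFinset (Function.update (Function.update (fun _ ↦ univ) b' K) b H) := by
    ext x
    simp only [mem_filter, mem_univ, true_and, Fintype.mem_piFinset]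
    refine ⟨fun ⟨hxb, hxb'⟩ k ↦ ?_, fun h ↦ ⟨by simpa using h b, by simpa [hb.symm] using h b'⟩⟩
    rcases eq_or_ne k b with rfl | hkb
    · simpa using hxb
    rcases eq_or_ne k b' with rfl | hkb'
    · simpa [hkb] using hxb'
    · simp [hkb, hkb']
  set c : ι → ℕ := fun _ ↦ Fintype.card α
  have hcard : ∀ k, #(Function.update (Function.update (fun _ ↦ univ) b' K) b H k)
      = Function.update (Function.update c b' #K) b #H k := fun k ↦ by
    simp only [Function.apply_update (fun _ ↦ Finset.card), card_univ, c]
  calc _ = ((∏ k, Function.update (Function.update c b' #K) b #H k)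
        * Function.update c b' #K b) * c b' := by
        simp [hcyl, hcard, hb, c, sq, mul_assoc]
    _ = #H * #K * Fintype.card α ^ Fintype.card ι := by
        rw [prod_update_mul_apply, mul_assoc, prod_update_mul_apply, prod_const, card_univ]
        ring

end Cylinder

section Slices

variable {F : Type} {n m : ℕ}

lemma sliceAt_mem_tensorPow {C : Set (Fin n → F)} {c : (Fin (m + 1) → Fin n) → F}
    (hc : c ∈ tensorPow C (m + 1)) (b : Fin (m + 1)) (i : Fin n) :
    sliceAt c b i ∈ tensorPow C m := fun b' x ↦ by
  simpa [sliceAt, Fin.insertNth_update] using hc (b.succAbove b') (b.insertNth i x)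

variable [DecidableEq F]

lemma hammingDist_sliceAt (f g : (Fin (m + 1) → Fin n) → F) (b : Fin (m + 1)) (i : Fin n) :
    hammingDist (sliceAt f b i) (sliceAt g b i) = #{x | f x ≠ g x ∧ x b = i} := by
  refine card_nbij' (fun y ↦ b.insertNth i y) b.removeNth ?_ ?_ ?_ ?_
  · intro y hy
    simp only [coe_filter, mem_univ, true_and, Set.mem_ofPred_eq] at hy ⊢
    exact ⟨hy, by simp⟩
  · intro x hx
    simp only [coe_filter, mem_univ, true_and, Set.mem_ofPred_eq] at hx ⊢
    obtain ⟨hne, rfl⟩ := hx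
    simpa [sliceAt] using hne
  · intro y _
    simp
  · intro x hx
    simp only [coe_filter, mem_univ, true_and, Set.mem_ofPred_eq] at hx
    obtain ⟨-, rfl⟩ := hx
    simp

lemma sum_hammingDist_sliceAt (f g : (Fin (m + 1) → Fin n) → F) (b : Fin (m + 1))
    (S : Finset (Fin n)) :
    ∑ i ∈ S, hammingDist (sliceAt f b i) (sliceAt g b i) = #{x | f x ≠ g x ∧ x b ∈ S} := by
  rw [card_eq_sum_card_fiberwise (f := fun x ↦ x b) (t := S) (fun x hx ↦ (mem_filter.1 hx).2.2)]
  refine sum_congr rfl fun i hi ↦ ?_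
  rw [hammingDist_sliceAt, filter_filter]
  congr 1
  refine filter_congr fun x _ ↦ ?_
  constructor
  · rintro ⟨hne, rfl⟩; exact ⟨⟨hne, hi⟩, rfl⟩
  · rintro ⟨⟨hne, -⟩, h⟩; exact ⟨hne, h⟩

lemma sum_relHammingDist_sliceAt (f g : (Fin (m + 1) → Fin n) → F) (b : Fin (m + 1))
    (S : Finset (Fin n)) :
    ∑ i ∈ S, relHammingDist (sliceAt f b i) (sliceAt g b i)
      = #{x | f x ≠ g x ∧ x b ∈ S} / (n : ℝ) ^ m := by
  simp only [relHammingDist, ← sum_div, Fintype.card_fun, Fintype.card_fin, Nat.cast_pow]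
  exact_mod_cast congrArg (fun k : ℕ ↦ (k : ℝ) / (n : ℝ) ^ m) (sum_hammingDist_sliceAt f g b S)

lemma sum_univ_relHammingDist_sliceAt (f g : (Fin (m + 1) → Fin n) → F) (b : Fin (m + 1)) :
    ∑ i, relHammingDist (sliceAt f b i) (sliceAt g b i) = n * relHammingDist f g := by
  rcases n.eq_zero_or_pos with rfl | hn
  · simp
  rw [sum_relHammingDist_sliceAt, relHammingDist, hammingDist, Fintype.card_fun,
    Fintype.card_fin, Fintype.card_fin]
  simp only [mem_univ, and_true, Nat.cast_pow]
  field_simp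
  ring

lemma hammingDist_le_card_add_card_add_card (f g : (Fin (m + 1) → Fin n) → F)
    (b b' : Fin (m + 1)) (H K : Finset (Fin n)) :
    hammingDist f g ≤ #{x : Fin (m + 1) → Fin n | x b ∈ H ∧ x b' ∈ K}
      + #{x | f x ≠ g x ∧ x b ∈ Hᶜ} + #{x | f x ≠ g x ∧ x b' ∈ Kᶜ} := by
  refine (card_le_card fun x hx ↦ ?_).trans ((card_union_le _ _).trans
    (add_le_add_left (card_union_le _ _) _))
  have hne : f x ≠ g x := (mem_filter.1 hx).2
  by_cases hb : x b ∈ H <;> by_cases hb' : x b' ∈ K <;> simp [hb, hb', hne]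

lemma mul_sum_relHammingDist_sliceAt_le (f g : (Fin (m + 1) → Fin n) → F) {b b' : Fin (m + 1)}
    (hb : b ≠ b') (H K : Finset (Fin n)) :
    n * ∑ i, relHammingDist (sliceAt f b i) (sliceAt g b i)
      ≤ #H * #K + n * (∑ i ∈ Hᶜ, relHammingDist (sliceAt f b i) (sliceAt g b i)
        + ∑ j ∈ Kᶜ, relHammingDist (sliceAt f b' j) (sliceAt g b' j)) := by
  rcases n.eq_zero_or_pos with rfl | hn
  · simp only [CharP.cast_eq_zero, zero_mul]
    positivity
  have hcyl : #{x : Fin (m + 1) → Fin n | x b ∈ H ∧ x b' ∈ K} * n = #H * #K * n ^ m := by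
    have := card_filter_mem_and_mem_mul_sq hb H K
    simp only [Fintype.card_fin] at this
    exact Nat.eq_of_mul_eq_mul_right hn (by rw [mul_assoc, ← sq, this]; ring)
  have hcount : (n : ℝ) * hammingDist f g ≤ #H * #K * (n : ℝ) ^ m
      + n * (#{x | f x ≠ g x ∧ x b ∈ Hᶜ} + #{x | f x ≠ g x ∧ x b' ∈ Kᶜ}) := by
    have := hammingDist_le_card_add_card_add_card f g b b' H K
    rw [← Nat.mul_le_mul_left_iff hn] at this
    exact_mod_cast (this.trans_eq (by rw [mul_add, mul_add, mul_comm n, hcyl]; ring))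
  rw [sum_relHammingDist_sliceAt, sum_relHammingDist_sliceAt, sum_relHammingDist_sliceAt]
  simp only [mem_univ, and_true]
  have hpos : (0 : ℝ) < (n : ℝ) ^ m := by positivity
  rw [← add_div, ← mul_div_assoc, ← mul_div_assoc, div_le_iff₀ hpos, add_mul,
    div_mul_cancel₀ _ hpos.ne']
  exact hcount

end Slices

lemma pow_le_hammingDist_of_mem_tensorPow {F : Type} [DecidableEq F] {n d : ℕ}
    {C : Set (Fin n → F)} (hC : ∀ x ∈ C, ∀ y ∈ C, x ≠ y → d ≤ hammingDist x y) :
    ∀ {m : ℕ} {w w' : (Fin m → Fin n) → F}, w ∈ tensorPow C m → w' ∈ tensorPow C m →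
      w ≠ w' → d ^ m ≤ hammingDist w w'
  | 0, _, _, _, _, hne => by simpa [Nat.one_le_iff_ne_zero] using hne
  | m + 1, w, w', hw, hw', hne => by
    obtain ⟨x, hx⟩ := Function.ne_iff.1 hne
    set S : Finset (Fin n) := {i | w (Function.update x 0 i) ≠ w' (Function.update x 0 i)}
    have hdS : d ≤ #S :=
      hC _ (hw 0 x) _ (hw' 0 x) fun h ↦ hx (by simpa using congrFun h (x 0))
    have hslice : ∀ i ∈ S, d ^ m ≤ hammingDist (sliceAt w 0 i) (sliceAt w' 0 i) := by
      intro i hi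
      refine pow_le_hammingDist_of_mem_tensorPow hC (sliceAt_mem_tensorPow hw 0 i)
        (sliceAt_mem_tensorPow hw' 0 i) fun h ↦ (mem_filter.1 hi).2 ?_
      have := congrFun h (Fin.removeNth 0 x)
      simp only [sliceAt, Fin.insertNth_removeNth] at this
      exact this
    calc d ^ (m + 1) ≤ #S * d ^ m := by rw [pow_succ']; gcongr
      _ ≤ ∑ i ∈ S, hammingDist (sliceAt w 0 i) (sliceAt w' 0 i) := by
        rw [← smul_eq_mul, ← sum_const]
        exact sum_le_sum hslice
      _ ≤ hammingDist w w' := by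
        rw [sum_hammingDist_sliceAt]
        exact card_le_card fun y hy ↦ by simp only [mem_filter] at hy ⊢; exact ⟨hy.1, hy.2.1⟩

lemma div_pow_le_relHammingDist_of_mem_tensorPow {F : Type} [DecidableEq F] {n m : ℕ}
    {C : Set (Fin n → F)} {w w' : (Fin m → Fin n) → F} (hw : w ∈ tensorPow C m)
    (hw' : w' ∈ tensorPow C m) (hne : w ≠ w') :
    ((minDist C : ℝ) / n) ^ m ≤ relHammingDist w w' := by
  rw [relHammingDist, Fintype.card_fun, Fintype.card_fin, Fintype.card_fin, div_pow,
    Nat.cast_pow]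
  gcongr
  exact_mod_cast pow_le_hammingDist_of_mem_tensorPow
    (fun _ hx _ hy hxy ↦ minDist_le_hammingDist hx hy hxy) hw hw' hne

section Expansion

variable {ι : Type*} [Fintype ι] [DecidableEq ι]

lemma exists_sum_compl_le_and_mul_card_le {u a : ι → ℝ} (D : ℝ) (hu : ∀ i, 0 ≤ u i)
    (ha : ∀ i, 0 ≤ a i) (hau : ∀ i, min (u i) (D - u i) ≤ a i) :
    ∃ H : Finset ι, ∑ i ∈ Hᶜ, u i ≤ ∑ i, a i ∧ D * #H ≤ ∑ i, u i + ∑ i, a i := by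
  set H : Finset ι := {i | D / 2 < u i}
  refine ⟨H, ?_, ?_⟩
  · calc ∑ i ∈ Hᶜ, u i ≤ ∑ i ∈ Hᶜ, a i := by
          refine sum_le_sum fun i hi ↦ ?_
          have : u i ≤ D / 2 := by simpa [H] using hi
          rcases min_le_iff.1 (hau i) with h | h <;> linarith
      _ ≤ ∑ i, a i := sum_le_sum_of_subset_of_nonneg (subset_univ _) fun i _ _ ↦ ha i
  · calc D * #H = ∑ i ∈ H, D := by
          rw [sum_const, nsmul_eq_mul, mul_comm]
      _ ≤ ∑ i ∈ H, (u i + a i) := by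
          refine sum_le_sum fun i hi ↦ ?_
          have : D / 2 < u i := (mem_filter.1 hi).2
          rcases min_le_iff.1 (hau i) with h | h <;> linarith
      _ ≤ ∑ i, (u i + a i) :=
          sum_le_sum_of_subset_of_nonneg (subset_univ _) fun i _ _ ↦ add_nonneg (hu i) (ha i)
      _ = ∑ i, u i + ∑ i, a i := sum_add_distrib

/-- `u i`, `v j` are the masses of the rows and columns of a grid and `a i`, `b j` their
robustness; `hmass` says that the mass lies in a block `H × K` or in the rows off `H` and the
columns off `K`. -/
lemma sum_div_four_le_sum_add_sum {N : ℝ} {u v a b : ι → ℝ} (hu : ∀ i, 0 ≤ u i)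
    (hv : ∀ j, 0 ≤ v j) (ha : ∀ i, 0 ≤ a i) (hb : ∀ j, 0 ≤ b j)
    (hau : ∀ i, min (u i) (7 / 8 - u i) ≤ a i) (hbv : ∀ j, min (v j) (7 / 8 - v j) ≤ b j)
    (huv : ∑ j, v j = ∑ i, u i) (hN : 4 * ∑ i, u i ≤ N)
    (hmass : ∀ H K : Finset ι,
      N * ∑ i, u i ≤ #H * #K + N * (∑ i ∈ Hᶜ, u i + ∑ j ∈ Kᶜ, v j)) :
    (∑ i, u i) / 4 ≤ ∑ i, a i + ∑ j, b j := by
  obtain ⟨H, hHu, hH⟩ := exists_sum_compl_le_and_mul_card_le (7 / 8) hu ha hau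
  obtain ⟨K, hKv, hK⟩ := exists_sum_compl_le_and_mul_card_le (7 / 8) hv hb hbv
  have hHK := hmass H K
  rw [huv] at hK
  set T := ∑ i, u i
  set A := ∑ i, a i
  set B := ∑ j, b j
  have hA : 0 ≤ A := sum_nonneg fun i _ ↦ ha i
  have hB : 0 ≤ B := sum_nonneg fun j _ ↦ hb j
  by_contra! hlt
  -- Then `#H, #K ≤ 10T/7`, so the block holds at most `(100/49) T² ≤ (25/49) N T` and the light
  -- lines at least `(24/49) N T > N (A + B)`.
  have hT : 0 < T := by linarith
  have hN0 : 0 < N := by linarith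
  have hprod : (#H : ℝ) * #K ≤ 10 / 7 * T * (10 / 7 * T) :=
    mul_le_mul (by linarith) (by linarith) (by positivity) (by positivity)
  nlinarith [mul_le_mul_of_nonneg_left (add_le_add hHu hKv) hN0.le, mul_pos hN0 hT]

end Expansion

lemma mul_relHammingDist_div_four_le {F : Type} [DecidableEq F] {n m : ℕ}
    {C : Set (Fin n → F)}
    (hC : ∀ w ∈ tensorPow C m, ∀ w' ∈ tensorPow C m, w ≠ w' → 7 / 8 ≤ relHammingDist w w')
    {r c : (Fin (m + 1) → Fin n) → F} (hc : c ∈ tensorPow C (m + 1))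
    (hclose : relHammingDist r c ≤ 1 / 4) {b b' : Fin (m + 1)} (hb : b ≠ b') :
    n * relHammingDist r c / 4 ≤ ∑ i, distToCode (tensorPow C m) (sliceAt r b i)
      + ∑ j, distToCode (tensorPow C m) (sliceAt r b' j) := by
  rw [← sum_univ_relHammingDist_sliceAt r c b]
  refine sum_div_four_le_sum_add_sum (N := n) (fun _ ↦ relHammingDist_nonneg _ _)
    (fun _ ↦ relHammingDist_nonneg _ _) (fun _ ↦ distToCode_nonneg _ _)
    (fun _ ↦ distToCode_nonneg _ _)
    (fun i ↦ min_le_distToCode hC (sliceAt_mem_tensorPow hc b i) _)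
    (fun j ↦ min_le_distToCode hC (sliceAt_mem_tensorPow hc b' j) _) ?_ ?_
    (mul_sum_relHammingDist_sliceAt_le r c hb)
  · rw [sum_univ_relHammingDist_sliceAt, sum_univ_relHammingDist_sliceAt]
  · rw [sum_univ_relHammingDist_sliceAt]
    nlinarith [(n.cast_nonneg : (0 : ℝ) ≤ n)]

theorem self_improvement_general
    {F : Type} [Field F] [DecidableEq F] {n d m : ℕ} (hm : 1 ≤ m)
    (C : Submodule F (Fin n → F))
    (hd : minDist (C : Set (Fin n → F)) = d)
    (hdn : (7 : ℝ) / 8 ≤ ((d : ℝ) / n) ^ m)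
    (r c : (Fin (m + 1) → Fin n) → F)
    (hc : c ∈ tensorPow (C : Set (Fin n → F)) (m + 1))
    (hclose : relHammingDist r c ≤ 1 / 4) :
    relHammingDist r c ≤
      8 * ((∑ b : Fin (m + 1), ∑ i : Fin n,
        distToCode (tensorPow (C : Set (Fin n → F)) m) (sliceAt r b i)) / ((m + 1) * n)) := by
  have hn : 0 < n := by
    refine Nat.pos_of_ne_zero fun hn ↦ ?_
    norm_num [hn, zero_pow (by omega : m ≠ 0)] at hdn
  have hC : ∀ w ∈ tensorPow (C : Set (Fin n → F)) m, ∀ w' ∈ tensorPow (C : Set (Fin n → F)) m,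
      w ≠ w' → 7 / 8 ≤ relHammingDist w w' := fun w hw w' hw' hne ↦
    hdn.trans (hd ▸ div_pow_le_relHammingDist_of_mem_tensorPow hw hw' hne)
  have hone : (1 : Fin (m + 1)) ≠ 0 := by
    rw [Ne, Fin.ext_iff, Fin.val_one', Fin.val_zero, Nat.mod_eq_of_lt (by omega)]
    omega
  set R : Fin (m + 1) → ℝ :=
    fun b ↦ ∑ i, distToCode (tensorPow (C : Set (Fin n → F)) m) (sliceAt r b i)
  set δ := relHammingDist r c
  have hsum : (m + 1) * (n * δ / 4) ≤ 2 * ∑ b, R b := by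
    calc (m + 1) * (n * δ / 4) = ∑ _b : Fin (m + 1), n * δ / 4 := by simp
      _ ≤ ∑ b, (R b + R (b + 1)) :=
          sum_le_sum fun b _ ↦ mul_relHammingDist_div_four_le hC hc hclose (left_ne_add.2 hone)
      _ = 2 * ∑ b, R b := by
          rw [sum_add_distrib,
            Fintype.sum_equiv (Equiv.addRight 1) (fun b ↦ R (b + 1)) R fun _ ↦ rfl]
          ring
  rw [mul_div_assoc', le_div_iff₀ (by positivity)]
  linear_combination 4 * hsum

/-- Self-improvement via expansion. Let `C` be an `[n,k,d]` code with
`(d/n)^{m-1} ≥ 7/8` (the ambient dimension here is `m+1`, so the exponent is `m`).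
If `r ∈ F^{[n]^{m+1}}` and a codeword `c ∈ C^{m+1}` satisfy `δ(r,c) ≤ 1/4`, then
`δ(r,c) ≤ 8·ρ(r)`, where `ρ(r)` is the expected distance of a uniformly random slice
`r_{b,i}` from `C^m`. -/
theorem self_improvement
    {F : Type} [Field F] [Fintype F] [DecidableEq F] {n k d m : ℕ} (hm : 1 ≤ m)
    (C : Submodule F (Fin n → F))
    (hk : Module.finrank F C = k)
    (hd : minDist (C : Set (Fin n → F)) = d)
    (hdn : (7 : ℝ) / 8 ≤ ((d : ℝ) / n) ^ m)
    (r c : (Fin (m + 1) → Fin n) → F)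
    (hc : c ∈ tensorPow (C : Set (Fin n → F)) (m + 1))
    (hclose : relHammingDist r c ≤ 1 / 4) :
    relHammingDist r c ≤
      8 * ((∑ b : Fin (m + 1), ∑ i : Fin n,
        distToCode (tensorPow (C : Set (Fin n → F)) m) (sliceAt r b i)) / ((m + 1) * n)) :=
  self_improvement_general hm C hd hdn r c hc hclose
end
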